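/- Let c > 0 and define φ(ζ) = −(3c/(1 + c)) sec²((√c/2) · ζ). Then at every ζ ∈ ℝ with cos((√c/2)ζ) ≠ 0, φ satisfies φ''(ζ) + ((1 + c)/2)φ(ζ)² + cφ(ζ) = 0. -/

import Mathlib

/-!
The function `y(ζ) = sec²(aζ)` satisfies `y'' = 6a²y² − 4a²y`. For `φ = K y` with `a² = c/4` this
reads `φ'' = (3c/(2K)) φ² − cφ`, and `K = −3c/(1 + c)` is exactly the amplitude for which
`3c/(2K) = −(1 + c)/2`.
-/

open Real

lemma hasDerivAt_cos_comp_mul (a s : ℝ) :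
    HasDerivAt (fun t => cos (a * t)) (-sin (a * s) * a) s := by
  simpa using ((hasDerivAt_id s).const_mul a).cos

lemma hasDerivAt_sin_comp_mul (a s : ℝ) :
    HasDerivAt (fun t => sin (a * t)) (cos (a * s) * a) s := by
  simpa using ((hasDerivAt_id s).const_mul a).sin

lemma hasDerivAt_sec_sq_comp_mul (a s : ℝ) (hs : cos (a * s) ≠ 0) :
    HasDerivAt (fun t => (1 / cos (a * t)) ^ 2) (2 * a * sin (a * s) / cos (a * s) ^ 3) s := by
  refine (((hasDerivAt_const s (1 : ℝ)).fun_div (hasDerivAt_cos_comp_mul a s) hs).fun_pow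
    2).congr_deriv ?_
  norm_num
  field_simp

lemma hasDerivAt_sin_div_cos_pow_three_comp_mul (a s : ℝ) (hs : cos (a * s) ≠ 0) :
    HasDerivAt (fun t => sin (a * t) / cos (a * t) ^ 3)
      (a * (3 - 2 * cos (a * s) ^ 2) / cos (a * s) ^ 4) s := by
  refine ((hasDerivAt_sin_comp_mul a s).fun_div ((hasDerivAt_cos_comp_mul a s).fun_pow 3)
    (pow_ne_zero 3 hs)).congr_deriv ?_
  field_simp
  rw [sin_sq]
  ring

lemma deriv_deriv_sec_sq_comp_mul (a ζ : ℝ) (hζ : cos (a * ζ) ≠ 0) :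
    deriv (deriv fun t => (1 / cos (a * t)) ^ 2) ζ
      = 6 * a ^ 2 * ((1 / cos (a * ζ)) ^ 2) ^ 2 - 4 * a ^ 2 * (1 / cos (a * ζ)) ^ 2 := by
  have hnear : ∀ᶠ s in nhds ζ, cos (a * s) ≠ 0 :=
    (continuous_cos.comp (continuous_const.mul continuous_id)).continuousAt.eventually_ne hζ
  have hderiv : deriv (fun t => (1 / cos (a * t)) ^ 2)
      =ᶠ[nhds ζ] fun s => 2 * a * (sin (a * s) / cos (a * s) ^ 3) := by
    filter_upwards [hnear] with s hs
    rw [(hasDerivAt_sec_sq_comp_mul a s hs).deriv]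
    ring
  rw [hderiv.deriv_eq,
    ((hasDerivAt_sin_div_cos_pow_three_comp_mul a ζ hζ).const_mul (2 * a)).deriv]
  field_simp
  ring

/-- For `c > 0`, the profile `φ(ζ) = −(3c/(1 + c)) sec²((√c/2) ζ)` satisfies
`φ'' + ((1 + c)/2)φ² + cφ = 0` at every `ζ` where `cos((√c/2)ζ) ≠ 0`. -/
theorem slow_periodic_wave_profile (c : ℝ) (hc : 0 < c) :
    ∀ ζ : ℝ, Real.cos ((Real.sqrt c / 2) * ζ) ≠ 0 →
      deriv (deriv (fun s : ℝ =>
          -(3 * c / (1 + c)) * (1 / Real.cos ((Real.sqrt c / 2) * s)) ^ 2)) ζ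
        + ((1 + c) / 2) *
          (-(3 * c / (1 + c)) * (1 / Real.cos ((Real.sqrt c / 2) * ζ)) ^ 2) ^ 2
        + c * (-(3 * c / (1 + c)) * (1 / Real.cos ((Real.sqrt c / 2) * ζ)) ^ 2) = 0 := by
  intro ζ hζ
  have ha : (√c / 2) ^ 2 = c / 4 := by rw [div_pow, sq_sqrt hc.le]; norm_num
  rw [deriv_const_mul_field', deriv_const_mul_field']
  beta_reduce
  rw [deriv_deriv_sec_sq_comp_mul _ _ hζ, ha]
  field_simp
  ring
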